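/- arXiv:2505.00954 — 2 statements merged into one kernel-verified Lean document; each statement's English description precedes it below -/
import Mathlib

section
/- Let $p>2$ and $\alpha\ge0$ satisfy $2\alpha+\frac{2\beta}{p-2}+\eta<1$. There exists a constant $C>0$ depending only on $C_0,p,\alpha,\beta,\eta$ such that for every measurable $h\colon[0,T]\times D\to\mathbb{R}$, $$\int_0^T\int_D\int_0^t\int_D\int_D|h(t,x)|^{\frac{p}{p-2}}(t-s)^{-2\alpha}\,G(t-s,x,y_1)^{\frac{p}{p-2}}\,G(t-s,x,y_2)\,\Lambda(y_1,y_2)\,d\mu(y_1)\,d\mu(y_2)\,ds\,d\mu(x)\,dt$$ $$\le C\,T^{(1-\eta)-2\alpha-\frac{2\beta}{p-2}}\int_0^T\int_D|h(t,x)|^{\frac{p}{p-2}}\,d\mu(x)\,dt,$$ where this estimate uses kernel assumptions (A) and (B). (This is the bound on the term $A$ in equations (42)–(43).) -/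
open MeasureTheory

private lemma aux_lint {t θ : ℝ} (ht : 0 < t) (hθ : θ < 1) :
    ∫⁻ s in Set.Ioo (0:ℝ) t, ENNReal.ofReal ((t - s) ^ (-θ)) =
      ENNReal.ofReal (t ^ (1-θ) / (1-θ)) := by
  have hInt : IntegrableOn (fun s : ℝ => (t - s) ^ (-θ)) (Set.Ioc 0 t) := by
    have h1 : IntervalIntegrable (fun u : ℝ => u ^ (-θ)) volume 0 t :=
      intervalIntegral.intervalIntegrable_rpow' (by linarith)
    have h2 := (h1.comp_sub_left t).symm
    simp only [sub_zero, sub_self] at h2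
    exact (intervalIntegrable_iff_integrableOn_Ioc_of_le ht.le).1 h2
  have hnn : 0 ≤ᵐ[volume.restrict (Set.Ioc (0:ℝ) t)] fun s : ℝ => (t - s) ^ (-θ) :=
    (ae_restrict_iff' measurableSet_Ioc).2 (Filter.Eventually.of_forall fun s hs =>
      Real.rpow_nonneg (sub_nonneg.2 hs.2) _)
  rw [MeasureTheory.setLIntegral_congr MeasureTheory.Ioo_ae_eq_Ioc,
    ← MeasureTheory.ofReal_integral_eq_lintegral_ofReal hInt hnn]
  congr 1
  have e : ∫ s in Set.Ioc (0:ℝ) t, (t - s) ^ (-θ) = ∫ s in (0:ℝ)..t, (t - s) ^ (-θ) :=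
    (intervalIntegral.integral_of_le ht.le).symm
  rw [e, intervalIntegral.integral_comp_sub_left (fun u : ℝ => u ^ (-θ)) t]
  simp only [sub_self, sub_zero]
  rw [integral_rpow (Or.inl (by linarith)),
    Real.zero_rpow (by linarith : -θ + 1 ≠ 0).symm.symm, sub_zero,
    show -θ + 1 = 1 - θ from by ring]

/-- Bound on the term `A` in equations (42)-(43): constant depends only on
`C₀, p, α, β, η`, using kernel assumptions (A) and (B). -/
theorem stmt_1 (C₀ β η p α : ℝ)
    (hC₀ : 0 < C₀) (hβ : 0 < β) (hη : 0 < η) (hη1 : η < 1)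
    (hp : 2 < p) (hα : 0 ≤ α)
    (hcond : 2 * α + 2 * β / (p - 2) + η < 1) :
    ∃ C : ℝ, 0 < C ∧
      ∀ (D : Type) [MeasurableSpace D] (μ : Measure D) (T : ℝ), 0 < T →
      ∀ (G : ℝ → D → D → ℝ) (Λ : D → D → ℝ),
        Measurable (fun q : ℝ × D × D => G q.1 q.2.1 q.2.2) →
        Measurable (fun q : D × D => Λ q.1 q.2) →
        (∀ t x y, 0 ≤ G t x y) →
        (∀ y₁ y₂, 0 ≤ Λ y₁ y₂) →
        (∀ y₁ y₂, Λ y₁ y₂ = Λ y₂ y₁) →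
        -- Assumption (A)
        (∀ t ∈ Set.Ioc (0:ℝ) T, ∀ x y, G t x y ≤ C₀ * t ^ (-β)) →
        -- Assumption (B)
        (∀ t ∈ Set.Ioc (0:ℝ) T, ∀ x,
          (∫⁻ y₁, ∫⁻ y₂, ENNReal.ofReal (G t x y₁ * G t x y₂ * Λ y₁ y₂) ∂μ ∂μ)
            ≤ ENNReal.ofReal (C₀ * t ^ (-η))) →
        ∀ (h : ℝ → D → ℝ), Measurable (fun q : ℝ × D => h q.1 q.2) →
        (∫⁻ t in Set.Ioc (0:ℝ) T, ∫⁻ x, (∫⁻ s in Set.Ioo (0:ℝ) t, ∫⁻ y₁, ∫⁻ y₂,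
            ENNReal.ofReal (|h t x| ^ (p/(p-2)) * (t - s) ^ (-(2*α))
              * G (t-s) x y₁ ^ (p/(p-2)) * G (t-s) x y₂ * Λ y₁ y₂) ∂μ ∂μ) ∂μ)
          ≤ ENNReal.ofReal (C * T ^ ((1-η) - 2*α - 2*β/(p-2))) *
            ∫⁻ t in Set.Ioc (0:ℝ) T, ∫⁻ x, ENNReal.ofReal (|h t x| ^ (p/(p-2))) ∂μ := by
  have hp2 : (0:ℝ) < p - 2 := by linarith
  set q : ℝ := p / (p - 2) with hqdef
  set θ : ℝ := 2*α + 2*β/(p-2) + η with hθdef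
  have hθ1 : θ < 1 := hcond
  have h1θ : 0 < 1 - θ := by linarith
  have hr : (0:ℝ) < 2/(p-2) := by positivity
  have hq : q = 2/(p-2) + 1 := by rw [hqdef]; field_simp; ring
  have hqpos : 0 < q := by rw [hq]; linarith
  have hCq : 0 < C₀ ^ q := Real.rpow_pos_of_pos hC₀ q
  refine ⟨C₀ ^ q / (1 - θ), div_pos hCq h1θ, ?_⟩
  intro D _ μ T hT G Λ hGm hΛm hGnn hΛnn hΛs hA hB h hh
  have hexp : (1-η) - 2*α - 2*β/(p-2) = 1 - θ := by rw [hθdef]; ring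
  rw [hexp]
  have key : ∀ t ∈ Set.Ioc (0:ℝ) T, ∀ x : D,
      (∫⁻ s in Set.Ioo (0:ℝ) t, ∫⁻ y₁, ∫⁻ y₂,
        ENNReal.ofReal (|h t x| ^ q * (t - s) ^ (-(2*α))
          * G (t-s) x y₁ ^ q * G (t-s) x y₂ * Λ y₁ y₂) ∂μ ∂μ)
      ≤ ENNReal.ofReal (C₀ ^ q * (T ^ (1-θ) / (1-θ))) * ENNReal.ofReal (|h t x| ^ q) := by
    intro t ht x
    have ht0 : 0 < t := ht.1
    have habs : (0:ℝ) ≤ |h t x| ^ q := Real.rpow_nonneg (abs_nonneg _) _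
    calc (∫⁻ s in Set.Ioo (0:ℝ) t, ∫⁻ y₁, ∫⁻ y₂,
            ENNReal.ofReal (|h t x| ^ q * (t - s) ^ (-(2*α))
              * G (t-s) x y₁ ^ q * G (t-s) x y₂ * Λ y₁ y₂) ∂μ ∂μ)
        ≤ ∫⁻ s in Set.Ioo (0:ℝ) t,
            ENNReal.ofReal (|h t x| ^ q * C₀ ^ q) * ENNReal.ofReal ((t - s) ^ (-θ)) := by
          refine lintegral_mono_ae ((ae_restrict_iff' measurableSet_Ioo).2
            (Filter.Eventually.of_forall fun s hs => ?_))
          have hts0 : 0 < t - s := sub_pos.2 hs.2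
          have htsT : t - s ∈ Set.Ioc (0:ℝ) T := ⟨hts0, by
            have := hs.1; have := ht.2; linarith⟩
          set K : ℝ := |h t x| ^ q * (t - s) ^ (-(2*α)) * (C₀ * (t-s)^(-β)) ^ (2/(p-2))
            with hK
          have hK0 : 0 ≤ K :=
            mul_nonneg (mul_nonneg habs (Real.rpow_nonneg hts0.le _))
              (Real.rpow_nonneg (mul_nonneg hC₀.le (Real.rpow_nonneg hts0.le _)) _)
          have step1 : ∀ y₁ y₂ : D,
              |h t x| ^ q * (t - s) ^ (-(2*α)) * G (t-s) x y₁ ^ q * G (t-s) x y₂ * Λ y₁ y₂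
                ≤ K * (G (t-s) x y₁ * G (t-s) x y₂ * Λ y₁ y₂) := by
            intro y₁ y₂
            have hG1 : G (t-s) x y₁ ^ q ≤ (C₀ * (t-s)^(-β)) ^ (2/(p-2)) * G (t-s) x y₁ := by
              rcases eq_or_lt_of_le (hGnn (t-s) x y₁) with h0 | h0
              · rw [← h0, Real.zero_rpow hqpos.ne', mul_zero]
              · rw [hq, Real.rpow_add_one h0.ne']
                exact mul_le_mul_of_nonneg_right
                  (Real.rpow_le_rpow (hGnn _ _ _) (hA _ htsT x y₁) hr.le) h0.le
            have hX0 : (0:ℝ) ≤ |h t x| ^ q * (t - s) ^ (-(2*α)) :=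
              mul_nonneg habs (Real.rpow_nonneg hts0.le _)
            calc |h t x| ^ q * (t - s) ^ (-(2*α)) * G (t-s) x y₁ ^ q * G (t-s) x y₂ * Λ y₁ y₂
                ≤ |h t x| ^ q * (t - s) ^ (-(2*α)) *
                    ((C₀ * (t-s)^(-β)) ^ (2/(p-2)) * G (t-s) x y₁) * G (t-s) x y₂ * Λ y₁ y₂ :=
                  mul_le_mul_of_nonneg_right (mul_le_mul_of_nonneg_right
                    (mul_le_mul_of_nonneg_left hG1 hX0) (hGnn _ _ _)) (hΛnn _ _)
              _ = K * (G (t-s) x y₁ * G (t-s) x y₂ * Λ y₁ y₂) := by rw [hK]; ring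
          have ereal : K * (C₀ * (t-s)^(-η)) = |h t x| ^ q * C₀ ^ q * (t-s) ^ (-θ) := by
            have e1 : (C₀ * (t-s)^(-β)) ^ (2/(p-2))
                = C₀ ^ (2/(p-2)) * (t-s) ^ ((-β) * (2/(p-2))) := by
              rw [Real.mul_rpow hC₀.le (Real.rpow_nonneg hts0.le _),
                ← Real.rpow_mul hts0.le]
            have e2 : (t-s) ^ (-(2*α)) * (t-s) ^ ((-β) * (2/(p-2))) * (t-s) ^ (-η)
                = (t-s) ^ (-θ) := by
              rw [← Real.rpow_add hts0, ← Real.rpow_add hts0]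
              congr 1
              rw [hθdef]; ring
            have e3 : C₀ ^ (2/(p-2)) * C₀ = C₀ ^ q := by
              rw [hq, Real.rpow_add_one hC₀.ne']
            rw [hK, e1, ← e3, ← e2]; ring
          calc (∫⁻ y₁, ∫⁻ y₂, ENNReal.ofReal (|h t x| ^ q * (t - s) ^ (-(2*α))
                  * G (t-s) x y₁ ^ q * G (t-s) x y₂ * Λ y₁ y₂) ∂μ ∂μ)
              ≤ ∫⁻ y₁, ∫⁻ y₂,
                  ENNReal.ofReal (K * (G (t-s) x y₁ * G (t-s) x y₂ * Λ y₁ y₂)) ∂μ ∂μ :=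
                lintegral_mono fun y₁ => lintegral_mono fun y₂ =>
                  ENNReal.ofReal_le_ofReal (step1 y₁ y₂)
            _ = ENNReal.ofReal K *
                  ∫⁻ y₁, ∫⁻ y₂, ENNReal.ofReal (G (t-s) x y₁ * G (t-s) x y₂ * Λ y₁ y₂) ∂μ ∂μ := by
                simp_rw [ENNReal.ofReal_mul hK0,
                  lintegral_const_mul' (ENNReal.ofReal K) _ ENNReal.ofReal_ne_top]
            _ ≤ ENNReal.ofReal K * ENNReal.ofReal (C₀ * (t-s)^(-η)) :=
                mul_le_mul_right (hB _ htsT x) _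
            _ = ENNReal.ofReal (|h t x| ^ q * C₀ ^ q) * ENNReal.ofReal ((t - s) ^ (-θ)) := by
                rw [← ENNReal.ofReal_mul hK0, ereal,
                  ENNReal.ofReal_mul (mul_nonneg habs hCq.le)]
      _ = ENNReal.ofReal (|h t x| ^ q * C₀ ^ q) *
            ∫⁻ s in Set.Ioo (0:ℝ) t, ENNReal.ofReal ((t - s) ^ (-θ)) :=
          lintegral_const_mul' _ _ ENNReal.ofReal_ne_top
      _ = ENNReal.ofReal (|h t x| ^ q * C₀ ^ q) * ENNReal.ofReal (t ^ (1-θ) / (1-θ)) := by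
          rw [aux_lint ht0 hθ1]
      _ ≤ ENNReal.ofReal (C₀ ^ q * (T ^ (1-θ) / (1-θ))) * ENNReal.ofReal (|h t x| ^ q) := by
          rw [← ENNReal.ofReal_mul (mul_nonneg habs hCq.le),
            ← ENNReal.ofReal_mul (mul_nonneg hCq.le (by positivity))]
          refine ENNReal.ofReal_le_ofReal ?_
          have hT' : t ^ (1-θ) ≤ T ^ (1-θ) := Real.rpow_le_rpow ht0.le ht.2 h1θ.le
          calc |h t x| ^ q * C₀ ^ q * (t ^ (1-θ) / (1-θ))
              ≤ |h t x| ^ q * C₀ ^ q * (T ^ (1-θ) / (1-θ)) :=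
                mul_le_mul_of_nonneg_left ((div_le_div_iff_of_pos_right h1θ).2 hT')
                  (mul_nonneg habs hCq.le)
            _ = C₀ ^ q * (T ^ (1-θ) / (1-θ)) * |h t x| ^ q := by ring
  calc (∫⁻ t in Set.Ioc (0:ℝ) T, ∫⁻ x, (∫⁻ s in Set.Ioo (0:ℝ) t, ∫⁻ y₁, ∫⁻ y₂,
          ENNReal.ofReal (|h t x| ^ q * (t - s) ^ (-(2*α))
            * G (t-s) x y₁ ^ q * G (t-s) x y₂ * Λ y₁ y₂) ∂μ ∂μ) ∂μ)
      ≤ ∫⁻ t in Set.Ioc (0:ℝ) T, ∫⁻ x,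
          ENNReal.ofReal (C₀ ^ q * (T ^ (1-θ) / (1-θ))) * ENNReal.ofReal (|h t x| ^ q) ∂μ := by
        refine lintegral_mono_ae ((ae_restrict_iff' measurableSet_Ioc).2
          (Filter.Eventually.of_forall fun t ht => lintegral_mono fun x => key t ht x))
    _ = ENNReal.ofReal (C₀ ^ q * (T ^ (1-θ) / (1-θ))) *
          ∫⁻ t in Set.Ioc (0:ℝ) T, ∫⁻ x, ENNReal.ofReal (|h t x| ^ q) ∂μ := by
        simp_rw [lintegral_const_mul' (ENNReal.ofReal (C₀ ^ q * (T ^ (1-θ) / (1-θ)))) _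
          ENNReal.ofReal_ne_top]
    _ = ENNReal.ofReal (C₀ ^ q / (1 - θ) * T ^ (1-θ)) *
          ∫⁻ t in Set.Ioc (0:ℝ) T, ∫⁻ x, ENNReal.ofReal (|h t x| ^ q) ∂μ := by
        congr 2
        ring
end

section
/- Let $p>2$ and $\alpha>0$ satisfy $\alpha p>\beta+1$, and let $v\colon[0,T]\times D\to\mathbb{R}$ be measurable with $\int_0^T\int_D|v(s,y)|^p\,d\mu(y)\,ds<\infty$. Define $Z(t,x)=\int_0^t\int_D(t-s)^{\alpha-1}G(t-s,x,y)\,v(s,y)\,d\mu(y)\,ds$. Then there exists a constant $C>0$ depending only on $C_0,p,\alpha,\beta$ (and not on $T$ or $v$) such that for all $t\in[0,T]$ and $x\in D$, $$|Z(t,x)|^p\le C\,T^{\alpha p-\beta-1}\int_0^T\int_D|v(s,y)|^p\,d\mu(y)\,ds.$$ This uses kernel assumptions (A) and (C1). (This is the deterministic factorization step, equations (38)–(39).) -/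
open MeasureTheory
open scoped ENNReal

/-- One-sided Hölder: only the first factor needs to be (a.e.) measurable, provided it is
everywhere finite. -/
lemma holder_one_side {X : Type*} [MeasurableSpace X] (μ : Measure X) {p q : ℝ}
    (hqp : Real.HolderConjugate q p) {f g : X → ℝ≥0∞} (hf : AEMeasurable f μ)
    (hftop : ∀ x, f x ≠ ⊤) :
    ∫⁻ a, f a * g a ∂μ ≤ (∫⁻ a, f a ^ q ∂μ) ^ (1/q) * (∫⁻ a, g a ^ p ∂μ) ^ (1/p) := by
  obtain ⟨h, hmeas, hle, heq⟩ :=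
    exists_measurable_le_lintegral_eq (μ := μ) (fun a => f a * g a)
  set g' : X → ℝ≥0∞ := fun x => h x / f x with hg'
  have hg'le : ∀ x, g' x ≤ g x := by
    intro x
    exact ENNReal.div_le_of_le_mul (le_trans (hle x) (le_of_eq (mul_comm _ _)))
  have hfg' : ∀ x, h x ≤ f x * g' x := by
    intro x
    by_cases hfx : f x = 0
    · have : h x = 0 := le_antisymm (by simpa [hfx] using hle x) bot_le
      simp [this]
    · rw [hg']
      rw [ENNReal.mul_div_cancel hfx (hftop x)]
  calc ∫⁻ a, f a * g a ∂μ = ∫⁻ a, h a ∂μ := heq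
    _ ≤ ∫⁻ a, (f * g') a ∂μ := lintegral_mono fun x => hfg' x
    _ ≤ (∫⁻ a, f a ^ q ∂μ) ^ (1/q) * (∫⁻ a, g' a ^ p ∂μ) ^ (1/p) :=
        ENNReal.lintegral_mul_le_Lp_mul_Lq μ hqp hf (hmeas.aemeasurable.div hf)
    _ ≤ (∫⁻ a, f a ^ q ∂μ) ^ (1/q) * (∫⁻ a, g a ^ p ∂μ) ^ (1/p) := by
        exact mul_le_mul' le_rfl (ENNReal.rpow_le_rpow
          (lintegral_mono fun x => ENNReal.rpow_le_rpow (hg'le x) hqp.symm.nonneg)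
          (one_div_nonneg.mpr hqp.symm.nonneg))

/-- `∫⁻_{(0,t)} (t-s)^r ds = t^(r+1)/(r+1)` for `r > -1`, `t ≥ 0`. -/
lemma lint_sub_rpow (t r : ℝ) (ht : 0 ≤ t) (hr : -1 < r) :
    ∫⁻ s in Set.Ioo (0:ℝ) t, ENNReal.ofReal ((t - s) ^ r)
      = ENNReal.ofReal (t ^ (r+1) / (r+1)) := by
  have hr1 : r + 1 ≠ 0 := by linarith
  rcases eq_or_lt_of_le ht with h0 | h0
  · simp [← h0, Real.zero_rpow hr1]
  have hii : IntervalIntegrable (fun s => (t - s) ^ r) volume 0 t := by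
    have := (intervalIntegral.intervalIntegrable_rpow' (a := 0) (b := t) hr).comp_sub_left t
    simpa using this.symm
  have hint : IntegrableOn (fun s => (t - s) ^ r) (Set.Ioo 0 t) volume :=
    (intervalIntegrable_iff_integrableOn_Ioo_of_le h0.le).mp hii
  have hnn : 0 ≤ᵐ[volume.restrict (Set.Ioo (0:ℝ) t)] fun s => (t - s) ^ r := by
    filter_upwards [ae_restrict_mem measurableSet_Ioo] with s hs
    exact Real.rpow_nonneg (by linarith [hs.2]) r
  rw [← ofReal_integral_eq_lintegral_ofReal hint hnn]
  congr 1
  have h1 : ∫ s in Set.Ioo (0:ℝ) t, (t - s) ^ r = ∫ s in (0:ℝ)..t, (t - s) ^ r := by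
    rw [intervalIntegral.integral_of_le h0.le, integral_Ioc_eq_integral_Ioo]
  rw [h1, intervalIntegral.integral_comp_sub_left (fun x => x ^ r) t]
  simp only [sub_zero, sub_self]
  rw [integral_rpow (Or.inl hr), Real.zero_rpow hr1]
  ring

/-- Deterministic factorization step, equations (38)-(39): constant depends only on
`C₀, p, α, β`, using kernel assumptions (A) and (C1). -/
theorem stmt_3 (C₀ β p α : ℝ) (hC₀ : 0 < C₀) (hβ : 0 < β)
    (hp : 2 < p) (hα : 0 < α) (hcond : β + 1 < α * p) :
    ∃ C : ℝ, 0 < C ∧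
      ∀ (D : Type) [MeasurableSpace D] (μ : Measure D) (T : ℝ), 0 < T →
      ∀ (G : ℝ → D → D → ℝ),
        Measurable (fun q : ℝ × D × D => G q.1 q.2.1 q.2.2) →
        (∀ t x y, 0 ≤ G t x y) →
        -- Assumption (A)
        (∀ t ∈ Set.Ioc (0:ℝ) T, ∀ x y, G t x y ≤ C₀ * t ^ (-β)) →
        -- Assumption (C1)
        (∀ t ∈ Set.Ioc (0:ℝ) T, ∀ x, (∫⁻ y, ENNReal.ofReal (G t x y) ∂μ) ≤ 1) →
        ∀ (v : ℝ → D → ℝ), Measurable (fun q : ℝ × D => v q.1 q.2) →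
        (∫⁻ s in Set.Ioc (0:ℝ) T, ∫⁻ y, ENNReal.ofReal (|v s y| ^ p) ∂μ) < ⊤ →
        ∀ t ∈ Set.Icc (0:ℝ) T, ∀ x : D,
          |∫ s in Set.Ioo (0:ℝ) t, ∫ y, (t - s) ^ (α - 1) * G (t-s) x y * v s y ∂μ| ^ p
            ≤ C * T ^ (α*p - β - 1) *
              (∫⁻ s in Set.Ioc (0:ℝ) T, ∫⁻ y, ENNReal.ofReal (|v s y| ^ p) ∂μ).toReal := by
  have hp1 : (1:ℝ) < p := by linarith
  have hp0 : (0:ℝ) < p := by linarith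
  have hp0' : p ≠ 0 := ne_of_gt hp0
  have hpm1 : (0:ℝ) < p - 1 := by linarith
  set q : ℝ := p / (p - 1) with hqdef
  have hq : Real.HolderConjugate p q := (Real.holderConjugate_iff_eq_conjExponent hp1).2 rfl
  have hq0 : (0:ℝ) < q := hq.symm.pos
  have hq0' : q ≠ 0 := ne_of_gt hq0
  set κ : ℝ := (α * p - β - 1) / (p - 1) with hκdef
  have hκ : 0 < κ := div_pos (by linarith) hpm1
  set a : ℝ := α - 1 - β / p with hadef
  have haq : a * q = κ - 1 := by rw [hadef, hκdef, hqdef]; field_simp; ring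
  have haq1 : a * q + 1 = κ := by rw [haq]; ring
  have hsum : 1/q + 1/p = 1 := by
    rw [one_div, one_div, add_comm]; exact hq.inv_add_inv_eq_one
  refine ⟨C₀ / κ ^ (p - 1), by positivity, ?_⟩
  intro D _ μ T hT G hGm hGnn hA hC1 v hvm hV t ht x
  obtain ⟨ht0, htT⟩ := ht
  set V := ∫⁻ s in Set.Ioc (0:ℝ) T, ∫⁻ y, ENNReal.ofReal (|v s y| ^ p) ∂μ with hVdef
  set Z := ∫ s in Set.Ioo (0:ℝ) t, ∫ y, (t - s) ^ (α - 1) * G (t-s) x y * v s y ∂μ with hZdef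
  have hVne : V ≠ ⊤ := ne_of_lt hV
  -- measurability helpers
  have hGy : ∀ u : ℝ, Measurable fun y => G u x y := fun u =>
    hGm.comp (measurable_const.prodMk (measurable_const.prodMk measurable_id))
  have hvy : ∀ s : ℝ, Measurable fun y => v s y := fun s =>
    hvm.comp (measurable_const.prodMk measurable_id)
  -- Step 1: pass to lintegrals
  have step1 : ENNReal.ofReal |Z| ≤ ∫⁻ s in Set.Ioo (0:ℝ) t,
      ∫⁻ y, ENNReal.ofReal ((t-s)^(α-1) * G (t-s) x y * |v s y|) ∂μ := by
    rw [← Real.enorm_eq_ofReal_abs]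
    refine le_trans (enorm_integral_le_lintegral_enorm _) ?_
    refine lintegral_mono_ae ?_
    filter_upwards [ae_restrict_mem measurableSet_Ioo] with s hs
    refine le_trans (enorm_integral_le_lintegral_enorm _) ?_
    refine lintegral_mono fun y => ?_
    rw [Real.enorm_eq_ofReal_abs]
    apply ENNReal.ofReal_le_ofReal
    rw [abs_mul, abs_mul,
      abs_of_nonneg (Real.rpow_nonneg (by linarith [hs.2] : (0:ℝ) ≤ t - s) _),
      abs_of_nonneg (hGnn _ _ _)]
  -- Step 2: inner Hölder estimate
  have step2 : ∀ s ∈ Set.Ioo (0:ℝ) t,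
      ∫⁻ y, ENNReal.ofReal ((t-s)^(α-1) * G (t-s) x y * |v s y|) ∂μ
        ≤ ENNReal.ofReal ((t-s) ^ a) *
          (ENNReal.ofReal C₀ * ∫⁻ y, ENNReal.ofReal (|v s y| ^ p) ∂μ) ^ (1/p) := by
    intro s hs
    set u : ℝ := t - s with hu
    have hu0 : (0:ℝ) < u := sub_pos.mpr hs.2
    have huT : u ≤ T := by rw [hu]; linarith [hs.1]
    set gf : D → ℝ≥0∞ := fun y => ENNReal.ofReal (G u x y) with hgf
    have hGmeas : Measurable gf := ENNReal.measurable_ofReal.comp (hGy u)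
    set f1 : D → ℝ≥0∞ := fun y => ENNReal.ofReal (u ^ a) * gf y ^ (1/q) with hf1
    set f2 : D → ℝ≥0∞ :=
      fun y => ENNReal.ofReal (u ^ (β/p)) * gf y ^ (1/p) * ENNReal.ofReal |v s y| with hf2
    have hf1m : Measurable f1 := (hGmeas.pow_const _).const_mul _
    have hf2m : Measurable f2 :=
      ((hGmeas.pow_const _).const_mul _).mul (ENNReal.measurable_ofReal.comp (hvy s).abs)
    have hpt : ∀ y, ENNReal.ofReal (u^(α-1) * G u x y * |v s y|) = (f1 * f2) y := by
      intro y
      rw [Pi.mul_apply,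
        ENNReal.ofReal_mul (mul_nonneg (Real.rpow_nonneg hu0.le _) (hGnn _ _ _)),
        ENNReal.ofReal_mul (Real.rpow_nonneg hu0.le _)]
      have e1 : u ^ (α-1) = u ^ a * u ^ (β/p) := by
        rw [← Real.rpow_add hu0]; congr 1; rw [hadef]; ring
      have e2 : ENNReal.ofReal (G u x y) = gf y ^ (1/q) * gf y ^ (1/p) := by
        rw [← ENNReal.rpow_add_of_nonneg _ _ (one_div_nonneg.mpr hq0.le)
          (one_div_nonneg.mpr hp0.le), hsum, ENNReal.rpow_one, hgf]
      rw [e1, ENNReal.ofReal_mul (Real.rpow_nonneg hu0.le _), e2, hf1, hf2]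
      ring
    have key1 : ∫⁻ y, f1 y ^ q ∂μ ≤ ENNReal.ofReal (u ^ a) ^ q := by
      have hptw : ∀ y, f1 y ^ q = ENNReal.ofReal (u ^ a) ^ q * gf y := by
        intro y
        rw [hf1, ENNReal.mul_rpow_of_nonneg _ _ hq0.le, ← ENNReal.rpow_mul,
          one_div, inv_mul_cancel₀ hq0', ENNReal.rpow_one]
      simp only [hptw]
      calc ∫⁻ y, ENNReal.ofReal (u^a)^q * gf y ∂μ
          = ENNReal.ofReal (u^a)^q * ∫⁻ y, gf y ∂μ :=
            lintegral_const_mul' _ _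
              (ENNReal.rpow_ne_top_of_nonneg hq0.le ENNReal.ofReal_ne_top)
        _ ≤ ENNReal.ofReal (u^a)^q * 1 := by
            gcongr
            exact hC1 u ⟨hu0, huT⟩ x
        _ = ENNReal.ofReal (u^a)^q := mul_one _
    have key2 : ∫⁻ y, f2 y ^ p ∂μ
        ≤ ENNReal.ofReal C₀ * ∫⁻ y, ENNReal.ofReal (|v s y| ^ p) ∂μ := by
      have hptw : ∀ y, f2 y ^ p
          = ENNReal.ofReal (u ^ (β/p)) ^ p * (gf y * ENNReal.ofReal (|v s y| ^ p)) := by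
        intro y
        rw [hf2, ENNReal.mul_rpow_of_nonneg _ _ hp0.le, ENNReal.mul_rpow_of_nonneg _ _ hp0.le,
          ← ENNReal.rpow_mul, one_div, inv_mul_cancel₀ hp0', ENNReal.rpow_one,
          ENNReal.ofReal_rpow_of_nonneg (abs_nonneg _) hp0.le]
        ring
      simp only [hptw]
      have hC₀u : u ^ β * (C₀ * u ^ (-β)) = C₀ := by
        rw [show u ^ β * (C₀ * u ^ (-β)) = C₀ * (u ^ β * u ^ (-β)) by ring,
          ← Real.rpow_add hu0, add_neg_cancel, Real.rpow_zero, mul_one]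
      calc ∫⁻ y, ENNReal.ofReal (u ^ (β/p)) ^ p * (gf y * ENNReal.ofReal (|v s y| ^ p)) ∂μ
          = ENNReal.ofReal (u ^ (β/p)) ^ p * ∫⁻ y, gf y * ENNReal.ofReal (|v s y| ^ p) ∂μ :=
            lintegral_const_mul' _ _
              (ENNReal.rpow_ne_top_of_nonneg hp0.le ENNReal.ofReal_ne_top)
        _ ≤ ENNReal.ofReal (u ^ (β/p)) ^ p *
              (ENNReal.ofReal (C₀ * u ^ (-β)) * ∫⁻ y, ENNReal.ofReal (|v s y| ^ p) ∂μ) := by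
            gcongr
            calc ∫⁻ y, gf y * ENNReal.ofReal (|v s y| ^ p) ∂μ
                ≤ ∫⁻ y, ENNReal.ofReal (C₀ * u ^ (-β)) * ENNReal.ofReal (|v s y| ^ p) ∂μ :=
                  lintegral_mono fun y => mul_le_mul'
                    (ENNReal.ofReal_le_ofReal (hA u ⟨hu0, huT⟩ x y)) le_rfl
              _ = ENNReal.ofReal (C₀ * u ^ (-β)) * ∫⁻ y, ENNReal.ofReal (|v s y| ^ p) ∂μ :=
                  lintegral_const_mul' _ _ ENNReal.ofReal_ne_top
        _ = ENNReal.ofReal C₀ * ∫⁻ y, ENNReal.ofReal (|v s y| ^ p) ∂μ := by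
            rw [ENNReal.ofReal_rpow_of_nonneg (Real.rpow_nonneg hu0.le _) hp0.le,
              ← Real.rpow_mul hu0.le, div_mul_cancel₀ _ hp0', ← mul_assoc,
              ← ENNReal.ofReal_mul (Real.rpow_nonneg hu0.le _), hC₀u]
    calc ∫⁻ y, ENNReal.ofReal (u^(α-1) * G u x y * |v s y|) ∂μ
        = ∫⁻ y, (f1 * f2) y ∂μ := lintegral_congr hpt
      _ ≤ (∫⁻ y, f1 y ^ q ∂μ) ^ (1/q) * (∫⁻ y, f2 y ^ p ∂μ) ^ (1/p) :=
          ENNReal.lintegral_mul_le_Lp_mul_Lq μ hq.symm hf1m.aemeasurable hf2m.aemeasurable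
      _ ≤ (ENNReal.ofReal (u^a) ^ q) ^ (1/q) *
            (ENNReal.ofReal C₀ * ∫⁻ y, ENNReal.ofReal (|v s y| ^ p) ∂μ) ^ (1/p) := by
          exact mul_le_mul' (ENNReal.rpow_le_rpow key1 (one_div_nonneg.mpr hq0.le))
            (ENNReal.rpow_le_rpow key2 (one_div_nonneg.mpr hp0.le))
      _ = ENNReal.ofReal (u^a) *
            (ENNReal.ofReal C₀ * ∫⁻ y, ENNReal.ofReal (|v s y| ^ p) ∂μ) ^ (1/p) := by
          rw [← ENNReal.rpow_mul, mul_one_div_cancel hq0', ENNReal.rpow_one]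
  -- Step 3: outer Hölder
  have step3 : ENNReal.ofReal |Z|
      ≤ ENNReal.ofReal (T ^ κ / κ) ^ (1/q) * (ENNReal.ofReal C₀ * V) ^ (1/p) := by
    refine le_trans step1 ?_
    have hmono : ∫⁻ s in Set.Ioo (0:ℝ) t,
        ∫⁻ y, ENNReal.ofReal ((t-s)^(α-1) * G (t-s) x y * |v s y|) ∂μ
        ≤ ∫⁻ s in Set.Ioo (0:ℝ) t, ENNReal.ofReal ((t-s) ^ a) *
            (ENNReal.ofReal C₀ * ∫⁻ y, ENNReal.ofReal (|v s y| ^ p) ∂μ) ^ (1/p) :=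
      lintegral_mono_ae (by
        filter_upwards [ae_restrict_mem measurableSet_Ioo] with s hs using step2 s hs)
    refine le_trans hmono ?_
    have hfmeas : Measurable fun s : ℝ => ENNReal.ofReal ((t - s) ^ a) :=
      ENNReal.measurable_ofReal.comp ((measurable_const.sub measurable_id).pow_const a)
    refine le_trans
      (holder_one_side (volume.restrict (Set.Ioo (0:ℝ) t)) hq.symm hfmeas.aemeasurable
        (fun s => ENNReal.ofReal_ne_top)) ?_
    have fac1 : (∫⁻ s in Set.Ioo (0:ℝ) t, ENNReal.ofReal ((t - s) ^ a) ^ q) ^ (1/q)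
        ≤ ENNReal.ofReal (T ^ κ / κ) ^ (1/q) := by
      apply ENNReal.rpow_le_rpow _ (one_div_nonneg.mpr hq0.le)
      have hcongr : ∫⁻ s in Set.Ioo (0:ℝ) t, ENNReal.ofReal ((t - s) ^ a) ^ q
          = ∫⁻ s in Set.Ioo (0:ℝ) t, ENNReal.ofReal ((t - s) ^ (a * q)) := by
        apply lintegral_congr_ae
        filter_upwards [ae_restrict_mem measurableSet_Ioo] with s hs
        rw [ENNReal.ofReal_rpow_of_nonneg
            (Real.rpow_nonneg (by linarith [hs.2] : (0:ℝ) ≤ t - s) _) hq0.le,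
          ← Real.rpow_mul (by linarith [hs.2] : (0:ℝ) ≤ t - s)]
      rw [hcongr, lint_sub_rpow t (a * q) ht0 (by rw [haq]; linarith)]
      apply ENNReal.ofReal_le_ofReal
      rw [haq1]
      exact (div_le_div_iff_of_pos_right hκ).mpr (Real.rpow_le_rpow ht0 htT hκ.le)
    have fac2 : (∫⁻ s in Set.Ioo (0:ℝ) t,
          ((ENNReal.ofReal C₀ * ∫⁻ y, ENNReal.ofReal (|v s y| ^ p) ∂μ) ^ (1/p)) ^ p) ^ (1/p)
        ≤ (ENNReal.ofReal C₀ * V) ^ (1/p) := by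
      apply ENNReal.rpow_le_rpow _ (one_div_nonneg.mpr hp0.le)
      have hpw : ∀ s : ℝ, ((ENNReal.ofReal C₀ *
            ∫⁻ y, ENNReal.ofReal (|v s y| ^ p) ∂μ) ^ (1/p)) ^ p
          = ENNReal.ofReal C₀ * ∫⁻ y, ENNReal.ofReal (|v s y| ^ p) ∂μ := by
        intro s
        rw [← ENNReal.rpow_mul, one_div, inv_mul_cancel₀ hp0', ENNReal.rpow_one]
      simp only [hpw]
      calc ∫⁻ s in Set.Ioo (0:ℝ) t, ENNReal.ofReal C₀ * ∫⁻ y, ENNReal.ofReal (|v s y| ^ p) ∂μ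
          = ENNReal.ofReal C₀ *
              ∫⁻ s in Set.Ioo (0:ℝ) t, ∫⁻ y, ENNReal.ofReal (|v s y| ^ p) ∂μ :=
            lintegral_const_mul' _ _ ENNReal.ofReal_ne_top
        _ ≤ ENNReal.ofReal C₀ * V := by
            gcongr
            exact lintegral_mono_set (fun y hy => ⟨hy.1, le_trans hy.2.le htT⟩)
    exact mul_le_mul' fac1 fac2
  -- Step 4: conclude
  have hfinal : ENNReal.ofReal (|Z| ^ p)
      ≤ ENNReal.ofReal (C₀ / κ ^ (p-1) * T ^ (α*p - β - 1)) * V := by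
    rw [← ENNReal.ofReal_rpow_of_nonneg (abs_nonneg _) hp0.le]
    calc ENNReal.ofReal |Z| ^ p
        ≤ (ENNReal.ofReal (T^κ/κ) ^ (1/q) * (ENNReal.ofReal C₀ * V) ^ (1/p)) ^ p :=
          ENNReal.rpow_le_rpow step3 hp0.le
      _ = ENNReal.ofReal (T^κ/κ) ^ ((1/q)*p) * (ENNReal.ofReal C₀ * V) := by
          rw [ENNReal.mul_rpow_of_nonneg _ _ hp0.le, ← ENNReal.rpow_mul, ← ENNReal.rpow_mul,
            one_div p, inv_mul_cancel₀ hp0', ENNReal.rpow_one]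
      _ = ENNReal.ofReal (C₀ / κ ^ (p-1) * T ^ (α*p - β - 1)) * V := by
          have hqp' : (1/q) * p = p - 1 := by rw [hqdef]; field_simp
          have hκγ : κ * (p-1) = α*p - β - 1 := by rw [hκdef]; field_simp
          rw [hqp', ENNReal.ofReal_rpow_of_nonneg (by positivity) hpm1.le, ← mul_assoc,
            ← ENNReal.ofReal_mul (by positivity)]
          congr 2
          rw [Real.div_rpow (Real.rpow_nonneg hT.le _) hκ.le, ← Real.rpow_mul hT.le, hκγ]
          ring
  have h1 : |Z| ^ p = (ENNReal.ofReal (|Z| ^ p)).toReal :=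
    (ENNReal.toReal_ofReal (Real.rpow_nonneg (abs_nonneg _) _)).symm
  rw [h1]
  refine le_trans (ENNReal.toReal_mono (ENNReal.mul_ne_top ENNReal.ofReal_ne_top hVne) hfinal)
    (le_of_eq ?_)
  rw [ENNReal.toReal_mul, ENNReal.toReal_ofReal (by positivity)]
end
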